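/- Let β > 0, δ > 0, and let u : ℝ → ℝ be twice continuously differentiable with u(0) = 0, u'(x) > 0 for x ∈ [0, W), u'(W) = 0, and u''(x) < 0 for x ∈ [0, W], where W > δ/β. Suppose 0 < ρ₁ < ρ₂, and let a₁, a₂ ∈ (δ/β, W) be the unique solutions of u(a)/u'(a) − a = (ρₖ + δ)/(β − δ/a) for k = 1, 2 respectively. Then a₁ < a₂; that is, the conjectural-equilibrium degree a^CE is strictly increasing in the discount rate ρ. -/

import Mathlib

/-!
Write `g(a) = u(a)/u'(a) - a` and `h_ρ(a) = (ρ + δ)/(β - δ/a)`. On `(0, W)` the function `g`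
has derivative `-u u''/u'^2 > 0`, so it is increasing, while `h_ρ` is decreasing in `a` on
`(δ/β, ∞)` and strictly increasing in `ρ`. Hence `a₂ ≤ a₁` would give
`g(a₂) ≤ g(a₁) = h_{ρ₁}(a₁) ≤ h_{ρ₁}(a₂) < h_{ρ₂}(a₂) = g(a₂)`.
-/

open Set

lemma pos_of_deriv_pos {u : ℝ → ℝ} {W x : ℝ} (hu : ContinuousOn u (Icc 0 W)) (hu0 : u 0 = 0)
    (hu' : ∀ y ∈ Ioo 0 W, 0 < deriv u y) (hx : x ∈ Ioc 0 W) : 0 < u x := by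
  have hmono : StrictMonoOn u (Icc 0 W) :=
    strictMonoOn_of_deriv_pos (convex_Icc 0 W) hu (by rwa [interior_Icc])
  simpa [hu0] using hmono (left_mem_Icc.mpr (hx.1.le.trans hx.2)) (Ioc_subset_Icc_self hx) hx.1

lemma hasDerivAt_div_deriv_sub_id {u : ℝ → ℝ} {x : ℝ} (hu : DifferentiableAt ℝ u x)
    (hu' : DifferentiableAt ℝ (deriv u) x) (hx : deriv u x ≠ 0) :
    HasDerivAt (fun a => u a / deriv u a - a)
      (-(u x * deriv (deriv u) x) / deriv u x ^ 2) x := by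
  refine ((hu.hasDerivAt.div hu'.hasDerivAt hx).sub (hasDerivAt_id' x)).congr_deriv ?_
  field_simp
  ring

lemma strictMonoOn_div_deriv_sub_id {u : ℝ → ℝ} {s : Set ℝ} (hs : Convex ℝ s)
    (hu : Differentiable ℝ u) (hu' : Differentiable ℝ (deriv u))
    (hpos : ∀ x ∈ s, 0 < u x) (hpos' : ∀ x ∈ s, 0 < deriv u x)
    (hneg'' : ∀ x ∈ s, deriv (deriv u) x < 0) :
    StrictMonoOn (fun a => u a / deriv u a - a) s := by
  refine strictMonoOn_of_deriv_pos hs ?_ fun x hx => ?_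
  · exact (hu.continuous.continuousOn.div hu'.continuous.continuousOn
      fun x hx => (hpos' x hx).ne').sub continuousOn_id
  · have hx := interior_subset hx
    rw [(hasDerivAt_div_deriv_sub_id (hu x) (hu' x) (hpos' x hx).ne').deriv]
    exact div_pos (neg_pos.mpr (mul_neg_of_pos_of_neg (hpos x hx) (hneg'' x hx)))
      (pow_pos (hpos' x hx) 2)

lemma sub_div_pos_of_div_lt {β δ a : ℝ} (hβ : 0 < β) (ha : 0 < a) (hδa : δ / β < a) :
    0 < β - δ / a := by
  rw [sub_pos, div_lt_iff₀ ha, mul_comm]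
  rwa [div_lt_iff₀ hβ] at hδa

lemma div_sub_div_le_div_sub_div {β δ c a b : ℝ} (hc : 0 ≤ c) (hδ : 0 ≤ δ) (ha : 0 < a)
    (hβa : 0 < β - δ / a) (hab : a ≤ b) : c / (β - δ / b) ≤ c / (β - δ / a) :=
  div_le_div_of_nonneg_left hc hβa (sub_le_sub_left (div_le_div_of_nonneg_left hδ ha hab) β)

theorem equilibrium_degree_increasing_in_rho_general
    (β δ ρ₁ ρ₂ W : ℝ) (hβ : 0 < β) (hδ : 0 < δ)
    (hρ₁ : 0 < ρ₁) (hρ : ρ₁ < ρ₂)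
    (u : ℝ → ℝ) (hu : ContDiff ℝ 2 u) (hu0 : u 0 = 0)
    (hu' : ∀ x : ℝ, 0 ≤ x → x < W → 0 < deriv u x)
    (hu'' : ∀ x : ℝ, 0 ≤ x → x ≤ W → deriv (deriv u) x < 0)
    (a₁ a₂ : ℝ)
    (ha₁ : a₁ ∈ Set.Ioo (δ / β) W)
    (heq₁ : u a₁ / deriv u a₁ - a₁ = (ρ₁ + δ) / (β - δ / a₁))
    (ha₂ : a₂ ∈ Set.Ioo (δ / β) W)
    (heq₂ : u a₂ / deriv u a₂ - a₂ = (ρ₂ + δ) / (β - δ / a₂)) :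
    a₁ < a₂ := by
  have ha₁0 : 0 < a₁ := (div_pos hδ hβ).trans ha₁.1
  have ha₂0 : 0 < a₂ := (div_pos hδ hβ).trans ha₂.1
  have hmono : StrictMonoOn (fun a => u a / deriv u a - a) (Ioo 0 W) :=
    strictMonoOn_div_deriv_sub_id (convex_Ioo 0 W) (hu.differentiable two_ne_zero)
      hu.differentiable_deriv_two
      (fun x hx => pos_of_deriv_pos hu.continuous.continuousOn hu0
        (fun y hy => hu' y hy.1.le hy.2) (Ioo_subset_Ioc_self hx))
      (fun x hx => hu' x hx.1.le hx.2) (fun x hx => hu'' x hx.1.le hx.2.le)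
  by_contra! h
  have hβa₂ := sub_div_pos_of_div_lt hβ ha₂0 ha₂.1
  have hle := calc
    (ρ₂ + δ) / (β - δ / a₂) = u a₂ / deriv u a₂ - a₂ := heq₂.symm
    _ ≤ u a₁ / deriv u a₁ - a₁ := hmono.monotoneOn ⟨ha₂0, ha₂.2⟩ ⟨ha₁0, ha₁.2⟩ h
    _ = (ρ₁ + δ) / (β - δ / a₁) := heq₁
    _ ≤ (ρ₁ + δ) / (β - δ / a₂) :=
      div_sub_div_le_div_sub_div (by positivity) hδ.le ha₂0 hβa₂ h
  exact hle.not_gt (div_lt_div_of_pos_right (by linarith) hβa₂)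

/-- **The conjectural-equilibrium degree is strictly increasing in the
discount rate `ρ`.**  If `0 < ρ₁ < ρ₂` and `a₁, a₂ ∈ (δ/β, W)` solve
`u(a)/u'(a) − a = (ρₖ + δ)/(β − δ/a)` for `k = 1, 2`, then `a₁ < a₂`. -/
theorem equilibrium_degree_increasing_in_rho
    (β δ ρ₁ ρ₂ W : ℝ) (hβ : 0 < β) (hδ : 0 < δ) (hW : δ / β < W)
    (hρ₁ : 0 < ρ₁) (hρ : ρ₁ < ρ₂)
    (u : ℝ → ℝ) (hu : ContDiff ℝ 2 u) (hu0 : u 0 = 0)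
    (hu' : ∀ x : ℝ, 0 ≤ x → x < W → 0 < deriv u x) (huW : deriv u W = 0)
    (hu'' : ∀ x : ℝ, 0 ≤ x → x ≤ W → deriv (deriv u) x < 0)
    (a₁ a₂ : ℝ)
    (ha₁ : a₁ ∈ Set.Ioo (δ / β) W)
    (heq₁ : u a₁ / deriv u a₁ - a₁ = (ρ₁ + δ) / (β - δ / a₁))
    (ha₂ : a₂ ∈ Set.Ioo (δ / β) W)
    (heq₂ : u a₂ / deriv u a₂ - a₂ = (ρ₂ + δ) / (β - δ / a₂)) :
    a₁ < a₂ :=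
  equilibrium_degree_increasing_in_rho_general β δ ρ₁ ρ₂ W hβ hδ hρ₁ hρ u hu hu0 hu' hu'' a₁ a₂ ha₁
    heq₁ ha₂ heq₂
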